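/- Let m ≥ 1, let d_1,…,d_m be strictly positive real numbers, and let K be a real number with |K| < ∏_{j=1}^{m} d_j. Then every complex root of the polynomial z ↦ ∏_{j=1}^{m} (z + d_j) − K has strictly negative real part. -/

import Mathlib

/-! If `0 ≤ Re z`, then `‖z + d_j‖ ≥ Re z + d_j ≥ d_j` for every `j`, so
`‖∏ (z + d_j)‖ ≥ ∏ d_j > |K|` and `z` cannot be a root. -/

open Finset

lemma Complex.le_norm_add_ofReal {z : ℂ} (hz : 0 ≤ z.re) (r : ℝ) : r ≤ ‖z + r‖ :=
  calc r ≤ (z + r).re := by simpa using hz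
    _ ≤ ‖z + r‖ := Complex.re_le_norm _

lemma Complex.prod_le_norm_prod_add_ofReal {ι : Type*} (s : Finset ι) {d : ι → ℝ}
    (hd : ∀ i ∈ s, 0 ≤ d i) {z : ℂ} (hz : 0 ≤ z.re) :
    ∏ i ∈ s, d i ≤ ‖∏ i ∈ s, (z + d i)‖ := by
  rw [norm_prod]
  exact prod_le_prod hd fun i _ => le_norm_add_ofReal hz (d i)

theorem roots_neg_re_of_abs_lt_general (m : ℕ)
    (d : Fin m → ℝ) (hd : ∀ j, 0 < d j)
    (K : ℝ) (hK : |K| < ∏ j : Fin m, d j) :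
    ∀ z : ℂ, (∏ j : Fin m, (z + (d j : ℂ))) - (K : ℂ) = 0 → z.re < 0 := by
  intro z hz
  by_contra! hre
  have hle := Complex.prod_le_norm_prod_add_ofReal univ (fun j _ => (hd j).le) hre
  rw [sub_eq_zero.mp hz, Complex.norm_real, Real.norm_eq_abs] at hle
  linarith

/-- Let `m ≥ 1`, let `d_1,…,d_m > 0`, and let `K` be real with `|K| < ∏ d_j`.
Then every complex root of `z ↦ ∏_{j=1}^m (z + d_j) − K` has strictly negative
real part. -/
theorem roots_neg_re_of_abs_lt (m : ℕ) (hm : 1 ≤ m)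
    (d : Fin m → ℝ) (hd : ∀ j, 0 < d j)
    (K : ℝ) (hK : |K| < ∏ j : Fin m, d j) :
    ∀ z : ℂ, (∏ j : Fin m, (z + (d j : ℂ))) - (K : ℂ) = 0 → z.re < 0 :=
  roots_neg_re_of_abs_lt_general m d hd K hK
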